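/- Let G be a finite simple graph that is MEG-extremal, i.e., meg(G) equals the number of vertices of G, and let H be any finite simple graph. Then the strong product G ⊠ H is MEG-extremal, i.e., meg(G ⊠ H) equals the number of vertices of G ⊠ H. -/

import Mathlib

open SimpleGraph

/-- A pair of vertices `u`, `v` monitors an edge `e` if `u` and `v` are reachable from
each other and `e` belongs to every shortest path (walk of length `G.dist u v`)
between `u` and `v`. -/
def Monitors {V : Type*} (G : SimpleGraph V) (u v : V) (e : Sym2 V) : Prop :=
  G.Reachable u v ∧ ∀ p : G.Walk u v, p.length = G.dist u v → e ∈ p.edges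

/-- A monitoring edge-geodetic set of `G`: every edge of `G` is monitored by some
pair of vertices of `M`. -/
def IsMEGSet {V : Type*} (G : SimpleGraph V) (M : Set V) : Prop :=
  ∀ e ∈ G.edgeSet, ∃ u ∈ M, ∃ v ∈ M, Monitors G u v e

/-- The monitoring edge-geodetic number of `G`: the minimum size of an MEG-set. -/
noncomputable def meg {V : Type*} [Fintype V] (G : SimpleGraph V) : ℕ :=
  sInf {n : ℕ | ∃ M : Finset V, IsMEGSet G ↑M ∧ M.card = n}

/-- The strong product of two simple graphs: `(a,b)` is adjacent to `(a',b')` iff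
`a = a'` and `b ~ b'`, or `a ~ a'` and `b = b'`, or `a ~ a'` and `b ~ b'`. -/
def strongProd {α β : Type*} (G : SimpleGraph α) (H : SimpleGraph β) :
    SimpleGraph (α × β) where
  Adj x y := (x.1 = y.1 ∧ H.Adj x.2 y.2) ∨ (G.Adj x.1 y.1 ∧ x.2 = y.2) ∨
    (G.Adj x.1 y.1 ∧ H.Adj x.2 y.2)
  symm := ⟨fun x y h => by
    rcases h with ⟨h1, h2⟩ | ⟨h1, h2⟩ | ⟨h1, h2⟩
    · exact Or.inl ⟨h1.symm, h2.symm⟩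
    · exact Or.inr (Or.inl ⟨h1.symm, h2.symm⟩)
    · exact Or.inr (Or.inr ⟨h1.symm, h2.symm⟩)⟩
  loopless := ⟨fun x h => by
    rcases h with ⟨_, h2⟩ | ⟨h1, _⟩ | ⟨h1, _⟩
    · exact H.ne_of_adj h2 rfl
    · exact G.ne_of_adj h1 rfl
    · exact G.ne_of_adj h1 rfl⟩

/-!
Distances in `G ⊠ H` are the maxima of the coordinate distances, and any pair of geodesics in
`G` and `H` combines into a geodesic of `G ⊠ H`. Hence a pair `P, Q` monitoring an edge
`(u, b)(v, b)` of a `G`-layer must lie in that layer, and `P.1, Q.1` monitor `uv` in `G`.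
Since `G` is MEG-extremal, each vertex `a` of `G` has an edge monitored only by pairs containing
`a`; copying that edge into the layer at `b` forces `(a, b)` into every MEG-set of `G ⊠ H`.
-/

section Projection

variable {V W : Type*} {G : SimpleGraph V} {G' : SimpleGraph W} {f : V → W}

theorem SimpleGraph.Walk.exists_length_le_of_adj_or_eq
    (hf : ∀ ⦃x y⦄, G.Adj x y → f x = f y ∨ G'.Adj (f x) (f y)) :
    ∀ {x y : V} (p : G.Walk x y), ∃ q : G'.Walk (f x) (f y), q.length ≤ p.length
  | _, _, .nil => ⟨.nil, le_rfl⟩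
  | _, _, .cons h p => by
    obtain ⟨q, hq⟩ := exists_length_le_of_adj_or_eq hf p
    rcases hf h with heq | hadj
    · exact ⟨q.copy heq.symm rfl, by simp; omega⟩
    · exact ⟨.cons hadj q, by simp; omega⟩

theorem SimpleGraph.Reachable.dist_le_of_adj_or_eq
    (hf : ∀ ⦃x y⦄, G.Adj x y → f x = f y ∨ G'.Adj (f x) (f y)) {x y : V} (h : G.Reachable x y) :
    G'.dist (f x) (f y) ≤ G.dist x y := by
  obtain ⟨p, hp⟩ := h.exists_walk_length_eq_dist
  obtain ⟨q, hq⟩ := p.exists_length_le_of_adj_or_eq hf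
  exact (dist_le q).trans (hp ▸ hq)

end Projection

section StrongProduct

variable {α β : Type*} {G : SimpleGraph α} {H : SimpleGraph β}

theorem strongProd_adj_fst ⦃P Q : α × β⦄ (h : (strongProd G H).Adj P Q) :
    P.1 = Q.1 ∨ G.Adj P.1 Q.1 := by
  rcases h with h | h | h <;> simp [h.1]

theorem strongProd_adj_snd ⦃P Q : α × β⦄ (h : (strongProd G H).Adj P Q) :
    P.2 = Q.2 ∨ H.Adj P.2 Q.2 := by
  rcases h with h | h | h <;> simp [h.2]

theorem SimpleGraph.Reachable.of_strongProd {P Q : α × β} (h : (strongProd G H).Reachable P Q) :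
    G.Reachable P.1 Q.1 ∧ H.Reachable P.2 Q.2 :=
  ⟨⟨(h.some.exists_length_le_of_adj_or_eq strongProd_adj_fst).choose⟩,
    ⟨(h.some.exists_length_le_of_adj_or_eq strongProd_adj_snd).choose⟩⟩

/-- Moves diagonally while both walks have steps left, then finishes the longer one. -/
def strongProdWalk : ∀ {x y : α} {b₁ b₂ : β}, G.Walk x y → H.Walk b₁ b₂ →
    (strongProd G H).Walk (x, b₁) (y, b₂)
  | _, _, _, _, .nil, .nil => .nil
  | x, _, b, _, .nil, .cons (v := c) h q =>
    .cons (show (strongProd G H).Adj (x, b) (x, c) from Or.inl ⟨rfl, h⟩) (strongProdWalk .nil q)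
  | x, _, b, _, .cons (v := z) h p, .nil =>
    .cons (show (strongProd G H).Adj (x, b) (z, b) from Or.inr (Or.inl ⟨h, rfl⟩))
      (strongProdWalk p .nil)
  | x, _, b, _, .cons (v := z) h p, .cons (v := c) h' q =>
    .cons (show (strongProd G H).Adj (x, b) (z, c) from Or.inr (Or.inr ⟨h, h'⟩))
      (strongProdWalk p q)

theorem length_strongProdWalk : ∀ {x y : α} {b₁ b₂ : β} (p : G.Walk x y) (q : H.Walk b₁ b₂),
    (strongProdWalk p q).length = max p.length q.length
  | _, _, _, _, .nil, .nil => by simp [strongProdWalk]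
  | _, _, _, _, .nil, .cons _ q => by simp [strongProdWalk, length_strongProdWalk .nil q]
  | _, _, _, _, .cons _ p, .nil => by simp [strongProdWalk, length_strongProdWalk p .nil]
  | _, _, _, _, .cons _ p, .cons _ q => by simp [strongProdWalk, length_strongProdWalk p q]

theorem mem_edges_strongProdWalk {u v : α} {b : β} (huv : u ≠ v) :
    ∀ {x y : α} {b₁ b₂ : β} (p : G.Walk x y) (q : H.Walk b₁ b₂),
    s((u, b), (v, b)) ∈ (strongProdWalk p q).edges → b = b₂ ∧ s(u, v) ∈ p.edges
  | _, _, _, _, .nil, .nil => by simp [strongProdWalk]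
  | _, _, _, _, .nil, .cons _ q => by
    simp only [strongProdWalk, Walk.edges_cons, List.mem_cons, Sym2.eq_iff, Prod.mk.injEq]
    rintro (h | h)
    · grind
    · simpa using mem_edges_strongProdWalk huv .nil q h
  | _, _, _, _, .cons _ p, .nil => by
    simp only [strongProdWalk, Walk.edges_cons, List.mem_cons, Sym2.eq_iff, Prod.mk.injEq]
    rintro (h | h)
    · grind
    · exact (mem_edges_strongProdWalk huv p .nil h).imp_right Or.inr
  | _, _, _, _, .cons _ p, .cons h q => by
    simp only [strongProdWalk, Walk.edges_cons, List.mem_cons, Sym2.eq_iff, Prod.mk.injEq]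
    rintro (h' | h')
    · grind [h.ne]
    · exact (mem_edges_strongProdWalk huv p q h').imp_right Or.inr

theorem strongProd_dist {P Q : α × β} (hG : G.Reachable P.1 Q.1) (hH : H.Reachable P.2 Q.2) :
    (strongProd G H).dist P Q = max (G.dist P.1 Q.1) (H.dist P.2 Q.2) := by
  obtain ⟨p, hp⟩ := hG.exists_walk_length_eq_dist
  obtain ⟨q, hq⟩ := hH.exists_walk_length_eq_dist
  have hPQ : (strongProd G H).Reachable P Q := ⟨strongProdWalk p q⟩
  refine le_antisymm ?_ (max_le (hPQ.dist_le_of_adj_or_eq strongProd_adj_fst)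
    (hPQ.dist_le_of_adj_or_eq strongProd_adj_snd))
  calc (strongProd G H).dist P Q ≤ (strongProdWalk p q).length := dist_le _
    _ = max (G.dist P.1 Q.1) (H.dist P.2 Q.2) := by rw [length_strongProdWalk, hp, hq]

end StrongProduct

theorem Monitors.symm {V : Type*} {G : SimpleGraph V} {u v : V} {e : Sym2 V}
    (h : Monitors G u v e) : Monitors G v u e :=
  ⟨h.1.symm, fun p hp => by
    simpa using h.2 p.reverse (by rw [Walk.length_reverse, hp, dist_comm])⟩

theorem monitors_of_adj {V : Type*} {G : SimpleGraph V} {u v : V} (h : G.Adj u v) :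
    Monitors G u v s(u, v) := by
  refine ⟨h.reachable, fun p hp => ?_⟩
  rw [dist_eq_one_iff_adj.mpr h] at hp
  cases p with
  | nil => simp at hp
  | cons h' p' =>
    cases Walk.eq_of_length_eq_zero (by simpa using hp : p'.length = 0)
    simp

/-- Each `strongProdWalk p q` with `p`, `q` geodesic is a geodesic, so it contains the edge;
but its only edges inside a `G`-layer lie in the layer of `Q`. -/
theorem Monitors.of_strongProd {α β : Type*} {G : SimpleGraph α} {H : SimpleGraph β}
    {P Q : α × β} {u v : α} {b : β} (huv : u ≠ v)
    (h : Monitors (strongProd G H) P Q s((u, b), (v, b))) :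
    Q.2 = b ∧ Monitors G P.1 Q.1 s(u, v) := by
  obtain ⟨hPQ, hgeod⟩ := h
  obtain ⟨hG, hH⟩ := hPQ.of_strongProd
  obtain ⟨q, hq⟩ := hH.exists_walk_length_eq_dist
  have key : ∀ p : G.Walk P.1 Q.1, p.length = G.dist P.1 Q.1 → b = Q.2 ∧ s(u, v) ∈ p.edges :=
    fun p hp => mem_edges_strongProdWalk huv p q <| hgeod (strongProdWalk p q) <| by
      rw [length_strongProdWalk, hp, hq, strongProd_dist hG hH]
  obtain ⟨p, hp⟩ := hG.exists_walk_length_eq_dist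
  exact ⟨(key p hp).1.symm, hG, fun p hp => (key p hp).2⟩

theorem isMEGSet_univ {V : Type*} (G : SimpleGraph V) : IsMEGSet G Set.univ := by
  intro e he
  induction e using Sym2.ind with
  | _ u v => exact ⟨u, trivial, v, trivial, monitors_of_adj he⟩

section MEG

variable {V : Type*} [Fintype V] {G : SimpleGraph V}

theorem meg_eq_card_iff :
    meg G = Fintype.card V ↔ ∀ M : Finset V, IsMEGSet G M → M = Finset.univ := by
  constructor
  · intro hG M hM
    refine Finset.eq_univ_of_forall fun a => ?_
    by_contra ha
    have hlt := Finset.card_lt_univ_of_notMem ha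
    have hle : meg G ≤ M.card := Nat.sInf_le ⟨M, hM, rfl⟩
    omega
  · intro h
    obtain ⟨M, hM, hcard⟩ := Nat.sInf_mem (s := {n | ∃ M : Finset V, IsMEGSet G M ∧ M.card = n})
      ⟨_, Finset.univ, by simpa using isMEGSet_univ G, rfl⟩
    rw [meg, ← hcard, h M hM, Finset.card_univ]

theorem exists_private_edge (hG : meg G = Fintype.card V) (a : V) :
    ∃ u v, G.Adj u v ∧ ∀ x y, Monitors G x y s(u, v) → x = a ∨ y = a := by
  classical
  by_contra! hcon
  have hM : IsMEGSet G ↑(Finset.univ.erase a) := by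
    intro e he
    induction e using Sym2.ind with
    | _ u v =>
      obtain ⟨x, y, hxy, hx, hy⟩ := hcon u v he
      exact ⟨x, by simpa using hx, y, by simpa using hy, hxy⟩
  simpa using congrArg (a ∈ ·) (meg_eq_card_iff.1 hG _ hM)

end MEG

/-- if `G` is MEG-extremal then so is the strong product `G ⊠ H`. -/
theorem meg_strongProd_extremal {α β : Type*} [Fintype α] [Fintype β]
    (G : SimpleGraph α) (H : SimpleGraph β) (hG : meg G = Fintype.card α) :
    meg (strongProd G H) = Fintype.card (α × β) := by
  refine meg_eq_card_iff.2 fun M hM => Finset.eq_univ_of_forall fun ⟨a, b⟩ => ?_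
  obtain ⟨u, v, huv, hpriv⟩ := exists_private_edge hG a
  obtain ⟨P, hP, Q, hQ, hmon⟩ := hM s((u, b), (v, b)) (Or.inr (Or.inl ⟨huv, rfl⟩))
  obtain ⟨hQb, hmonG⟩ := hmon.of_strongProd huv.ne
  obtain ⟨hPb, -⟩ := hmon.symm.of_strongProd huv.ne
  rcases hpriv P.1 Q.1 hmonG with rfl | rfl
  · simpa [← hPb] using hP
  · simpa [← hQb] using hQ
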